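/- arXiv:1506.01785 — 3 statements merged into one kernel-verified Lean document; each statement's English description precedes it below -/
import Mathlib

section
/- For any constants α > 0, C₁ > 0, δ > 0, there exists C > 0 such that for all sufficiently small h > 0 and all x ∈ [C₁ h^{2/3}, δ], one has x^{-1/4} ∫_{C₁ h^{2/3}}^{δ} t^{-1/4} e^{-α |t^{3/2} - x^{3/2}|/h} dt ≤ C h^{1/3}. -/
/-!
On `[a, ∞)` the map `t ↦ t^{3/2}` has slope at least `√a`, so the integrand is dominated by
`a^{-1/4} e^{-β|t-x|}` with `β = α√a/h`, whose integral over any interval is at most `2/β`.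
Together with `x^{-1/4} ≤ a^{-1/4}` this bounds the left side by `2h/(αa)`, which is
`(2/(αC₁)) h^{1/3}` for `a = C₁ h^{2/3}`.
-/

open MeasureTheory Real Set intervalIntegral

lemma rpow_three_halves_eq_mul_sqrt {x : ℝ} (hx : 0 ≤ x) : x ^ ((3:ℝ)/2) = x * √x := by
  rw [sqrt_eq_rpow, show (3:ℝ)/2 = 1 + 1/2 by norm_num, rpow_add' hx (by norm_num), rpow_one]

lemma sqrt_mul_sub_le_rpow_three_halves_sub {u s : ℝ} (hu : 0 ≤ u) (hus : u ≤ s) :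
    √s * (s - u) ≤ s ^ ((3:ℝ)/2) - u ^ ((3:ℝ)/2) := by
  rw [rpow_three_halves_eq_mul_sqrt hu, rpow_three_halves_eq_mul_sqrt (hu.trans hus)]
  -- `s√s - u√u = √s (s - u) + u (√s - √u)`
  nlinarith [mul_le_mul_of_nonneg_left (sqrt_le_sqrt hus) hu]

lemma sqrt_mul_abs_sub_le_abs_rpow_three_halves_sub {a s u : ℝ} (ha : 0 ≤ a) (hs : a ≤ s)
    (hu : a ≤ u) : √a * |s - u| ≤ |s ^ ((3:ℝ)/2) - u ^ ((3:ℝ)/2)| := by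
  wlog hus : u ≤ s generalizing s u
  · rw [abs_sub_comm, abs_sub_comm (s ^ _)]
    exact this hu hs (le_of_not_ge hus)
  rw [abs_of_nonneg (sub_nonneg.2 hus),
    abs_of_nonneg (sub_nonneg.2 (rpow_le_rpow (ha.trans hu) hus (by norm_num)))]
  calc √a * (s - u) ≤ √s * (s - u) :=
        mul_le_mul_of_nonneg_right (sqrt_le_sqrt hs) (sub_nonneg.2 hus)
    _ ≤ _ := sqrt_mul_sub_le_rpow_three_halves_sub (ha.trans hu) hus

lemma integral_exp_neg_mul_abs_le {β u : ℝ} (hβ : 0 < β) (hu : 0 ≤ u) :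
    ∫ s in (0:ℝ)..u, exp (-β * |s|) ≤ 1 / β := by
  have hrw : ∫ s in (0:ℝ)..u, exp (-β * |s|) = ∫ s in (0:ℝ)..u, exp (-β * s) :=
    integral_congr fun s hs => by
      rw [uIcc_of_le hu] at hs
      simp only [abs_of_nonneg hs.1]
  rw [hrw, integral_comp_mul_left exp (neg_ne_zero.2 hβ.ne'), integral_exp, smul_eq_mul,
    mul_zero, exp_zero]
  have := exp_pos (-β * u)
  rw [div_eq_mul_inv, one_mul, ← neg_inv]
  nlinarith [inv_pos.2 hβ]

lemma integral_exp_neg_mul_abs_sub_le {β a b x : ℝ} (hβ : 0 < β) (hax : a ≤ x) (hxb : x ≤ b) :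
    ∫ t in a..b, exp (-β * |t - x|) ≤ 2 / β := by
  have hint : ∀ c d, IntervalIntegrable (fun t => exp (-β * |t - x|)) volume c d :=
    fun c d => by apply Continuous.intervalIntegrable; fun_prop
  have hleft : ∫ t in a..x, exp (-β * |t - x|) ≤ 1 / β := by
    have hreflect := integral_comp_neg (a := 0) (b := x - a) fun s => exp (-β * |s|)
    simp only [abs_neg, neg_sub, neg_zero] at hreflect
    rw [integral_comp_sub_right (fun s => exp (-β * |s|)), sub_self, ← hreflect]
    exact integral_exp_neg_mul_abs_le hβ (sub_nonneg.2 hax)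
  have hright : ∫ t in x..b, exp (-β * |t - x|) ≤ 1 / β := by
    rw [integral_comp_sub_right (fun s => exp (-β * |s|)), sub_self]
    exact integral_exp_neg_mul_abs_le hβ (sub_nonneg.2 hxb)
  rw [← integral_add_adjacent_intervals (hint a x) (hint x b)]
  linarith [show 1 / β + 1 / β = 2 / β by ring]

lemma rpow_neg_quarter_mul_self {a : ℝ} (ha : 0 < a) :
    a ^ (-(1:ℝ)/4) * a ^ (-(1:ℝ)/4) = (√a)⁻¹ := by
  rw [← rpow_add ha, sqrt_eq_rpow, ← rpow_neg ha.le]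
  norm_num

lemma rpow_neg_quarter_mul_exp_le {α h a t x : ℝ} (hα : 0 ≤ α) (hh : 0 < h) (ha : 0 < a)
    (ht : a ≤ t) (hx : a ≤ x) :
    t ^ (-(1:ℝ)/4) * exp (-α * |t ^ ((3:ℝ)/2) - x ^ ((3:ℝ)/2)| / h)
      ≤ a ^ (-(1:ℝ)/4) * exp (-(α * √a / h) * |t - x|) := by
  have hexp : -α * |t ^ ((3:ℝ)/2) - x ^ ((3:ℝ)/2)| / h ≤ -(α * √a / h) * |t - x| := by
    rw [neg_mul, neg_mul, neg_div, neg_le_neg_iff, div_mul_eq_mul_div, mul_assoc]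
    gcongr
    exact sqrt_mul_abs_sub_le_abs_rpow_three_halves_sub ha.le ht hx
  exact mul_le_mul (rpow_le_rpow_of_nonpos ha ht (by norm_num)) (exp_le_exp.2 hexp)
    (exp_pos _).le (rpow_nonneg ha.le _)

lemma rpow_neg_quarter_mul_integral_le {α h a b x : ℝ} (hα : 0 < α) (hh : 0 < h) (ha : 0 < a)
    (hax : a ≤ x) (hxb : x ≤ b) :
    x ^ (-(1:ℝ)/4) * (∫ t in a..b,
        t ^ (-(1:ℝ)/4) * exp (-α * |t ^ ((3:ℝ)/2) - x ^ ((3:ℝ)/2)| / h))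
      ≤ 2 * h / (α * a) := by
  set β := α * √a / h
  have hβ : 0 < β := by positivity
  have hab : a ≤ b := hax.trans hxb
  have hint : IntervalIntegrable (fun t =>
      t ^ (-(1:ℝ)/4) * exp (-α * |t ^ ((3:ℝ)/2) - x ^ ((3:ℝ)/2)| / h)) volume a b := by
    apply ContinuousOn.intervalIntegrable
    have hne : ∀ t ∈ uIcc a b, t ≠ 0 := fun t ht => by
      rw [uIcc_of_le hab] at ht
      exact (ha.trans_le ht.1).ne'
    fun_prop (disch := first | exact hne | exact Or.inl (hne _ ‹_›) | norm_num)
  have hdom : ∫ t in a..b, t ^ (-(1:ℝ)/4) * exp (-α * |t ^ ((3:ℝ)/2) - x ^ ((3:ℝ)/2)| / h)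
      ≤ a ^ (-(1:ℝ)/4) * (2 / β) := by
    calc _ ≤ ∫ t in a..b, a ^ (-(1:ℝ)/4) * exp (-β * |t - x|) :=
          integral_mono_on hab hint (Continuous.intervalIntegrable (by fun_prop) a b)
            fun t ht => rpow_neg_quarter_mul_exp_le hα.le hh ha ht.1 hax
      _ = a ^ (-(1:ℝ)/4) * ∫ t in a..b, exp (-β * |t - x|) := integral_const_mul _ _
      _ ≤ a ^ (-(1:ℝ)/4) * (2 / β) := by
          gcongr
          exact integral_exp_neg_mul_abs_sub_le hβ hax hxb
  have hnonneg : 0 ≤ ∫ t in a..b,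
      t ^ (-(1:ℝ)/4) * exp (-α * |t ^ ((3:ℝ)/2) - x ^ ((3:ℝ)/2)| / h) :=
    integral_nonneg hab fun t ht => by have := ha.trans_le ht.1; positivity
  calc _ ≤ a ^ (-(1:ℝ)/4) * (a ^ (-(1:ℝ)/4) * (2 / β)) :=
        mul_le_mul (rpow_le_rpow_of_nonpos ha hax (by norm_num)) hdom hnonneg
          (rpow_nonneg ha.le _)
    _ = 2 * h / (α * a) := by
        rw [← mul_assoc, rpow_neg_quarter_mul_self ha]
        simp only [β]
        field_simp
        rw [sq_sqrt ha.le]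

theorem stmt1_general (α C₁ δ : ℝ) (hα : 0 < α) (hC₁ : 0 < C₁) :
    ∃ C > 0, ∃ h₀ > 0, ∀ h : ℝ, 0 < h → h < h₀ →
      ∀ x ∈ Set.Icc (C₁ * h ^ ((2:ℝ)/3)) δ,
        x ^ (-(1:ℝ)/4) * (∫ t in (C₁ * h ^ ((2:ℝ)/3))..δ,
            t ^ (-(1:ℝ)/4) * Real.exp (-α * |t ^ ((3:ℝ)/2) - x ^ ((3:ℝ)/2)| / h))
          ≤ C * h ^ ((1:ℝ)/3) := by
  refine ⟨2 / (α * C₁), by positivity, 1, one_pos, fun h hh _ x hx => ?_⟩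
  have hsplit : h = h ^ ((1:ℝ)/3) * h ^ ((2:ℝ)/3) := by
    rw [← rpow_add hh]; norm_num
  calc _ ≤ 2 * h / (α * (C₁ * h ^ ((2:ℝ)/3))) :=
        rpow_neg_quarter_mul_integral_le hα hh (by positivity) hx.1 hx.2
    _ = 2 / (α * C₁) * h ^ ((1:ℝ)/3) := by
        have : 0 < h ^ ((2:ℝ)/3) := by positivity
        nth_rw 1 [hsplit]
        field_simp

/-- For any constants `α > 0`, `C₁ > 0`, `δ > 0`, there exists `C > 0` such that for all
sufficiently small `h > 0` and all `x ∈ [C₁ h^{2/3}, δ]`, one has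
`x^{-1/4} ∫_{C₁ h^{2/3}}^{δ} t^{-1/4} e^{-α |t^{3/2} - x^{3/2}|/h} dt ≤ C h^{1/3}`. -/
theorem stmt1 (α C₁ δ : ℝ) (hα : 0 < α) (hC₁ : 0 < C₁) (hδ : 0 < δ) :
    ∃ C > 0, ∃ h₀ > 0, ∀ h : ℝ, 0 < h → h < h₀ →
      ∀ x ∈ Set.Icc (C₁ * h ^ ((2:ℝ)/3)) δ,
        x ^ (-(1:ℝ)/4) * (∫ t in (C₁ * h ^ ((2:ℝ)/3))..δ,
            t ^ (-(1:ℝ)/4) * Real.exp (-α * |t ^ ((3:ℝ)/2) - x ^ ((3:ℝ)/2)| / h))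
          ≤ C * h ^ ((1:ℝ)/3) :=
  stmt1_general α C₁ δ hα hC₁
end

section
/- For any α > 0 and δ' > 0 there exists C > 0 such that for all sufficiently small h > 0, the double integral ∬_{[C₂ h, δ']²} t^{-2/3} s^{-1/2} e^{-α|t-s|/h} dt ds ≤ C h^{5/6}, where C₂ > 0 is any fixed constant. -/
/-!
Since `t^{-2/3} s^{-1/2} ≤ min(t, s)^{-7/6} ≤ t^{-7/6} + s^{-7/6}` and the kernel
`e^{-α|t-s|/h}` is symmetric in `t` and `s`, Fubini bounds the double integral by
`2 ∫ t^{-7/6} (∫ e^{-α|t-s|/h} ds) dt`. The inner integral is at most `2h/α` (its value over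
the whole line) and `∫_{C₂h}^∞ t^{-7/6} dt = 6 (C₂h)^{-1/6}`, which gives
`24 α⁻¹ C₂^{-1/6} h^{5/6}`.
-/

open MeasureTheory Real Set

theorem rpow_mul_rpow_le_rpow_add_add_rpow_add {p q t s : ℝ} (hp : p ≤ 0) (hq : q ≤ 0)
    (ht : 0 < t) (hs : 0 < s) : t ^ p * s ^ q ≤ t ^ (p + q) + s ^ (p + q) := by
  rcases le_total t s with hts | hst
  · calc t ^ p * s ^ q ≤ t ^ p * t ^ q :=
          mul_le_mul_of_nonneg_left (rpow_le_rpow_of_nonpos ht hts hq) (rpow_nonneg ht.le p)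
      _ = t ^ (p + q) := (rpow_add ht p q).symm
      _ ≤ t ^ (p + q) + s ^ (p + q) := le_add_of_nonneg_right (rpow_nonneg hs.le _)
  · calc t ^ p * s ^ q ≤ s ^ p * s ^ q :=
          mul_le_mul_of_nonneg_right (rpow_le_rpow_of_nonpos hs hst hp) (rpow_nonneg hs.le q)
      _ = s ^ (p + q) := (rpow_add hs p q).symm
      _ ≤ t ^ (p + q) + s ^ (p + q) := le_add_of_nonneg_left (rpow_nonneg ht.le _)

theorem integrable_exp_neg_mul_abs {β : ℝ} (hβ : 0 < β) :
    Integrable fun x : ℝ => exp (-β * |x|) := by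
  rw [← integrableOn_univ, ← Iic_union_Ioi (a := 0), integrableOn_union]
  constructor
  · refine (integrableOn_exp_mul_Iic hβ 0).congr_fun (fun x hx => ?_) measurableSet_Iic
    rw [abs_of_nonpos hx, mul_neg, neg_mul, neg_neg]
  · refine (integrableOn_exp_mul_Ioi (neg_lt_zero.2 hβ) 0).congr_fun (fun x hx => ?_)
      measurableSet_Ioi
    rw [abs_of_pos hx]

theorem integral_exp_neg_mul_abs {β : ℝ} (hβ : 0 < β) :
    ∫ x : ℝ, exp (-β * |x|) = 2 / β := by
  rw [integral_comp_abs (f := fun x => exp (-β * x)), integral_exp_mul_Ioi (neg_lt_zero.2 hβ)]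
  field_simp
  simp

theorem setIntegral_exp_neg_mul_abs_sub_le {β : ℝ} (hβ : 0 < β) (t : ℝ) (S : Set ℝ) :
    ∫ s in S, exp (-β * |t - s|) ≤ 2 / β := by
  have hint : Integrable fun s : ℝ => exp (-β * |t - s|) :=
    (integrable_exp_neg_mul_abs hβ).comp_sub_left t
  calc ∫ s in S, exp (-β * |t - s|) ≤ ∫ s, exp (-β * |t - s|) :=
        setIntegral_le_integral hint (Filter.Eventually.of_forall fun _ => (exp_pos _).le)
    _ = 2 / β := by
      rw [integral_sub_left_eq_self (fun x => exp (-β * |x|)), integral_exp_neg_mul_abs hβ]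

theorem setIntegral_Icc_rpow_le {r a : ℝ} (hr : r < -1) (ha : 0 < a) (b : ℝ) :
    ∫ t in Icc a b, t ^ r ≤ -a ^ (r + 1) / (r + 1) :=
  calc ∫ t in Icc a b, t ^ r ≤ ∫ t in Ici a, t ^ r :=
        setIntegral_mono_set
          ((integrableOn_Ici_iff_integrableOn_Ioi).2 (integrableOn_Ioi_rpow_of_lt hr ha))
          ((ae_restrict_iff' measurableSet_Ici).2 (Filter.Eventually.of_forall
            fun t ht => rpow_nonneg (ha.le.trans ht) r))
          (Filter.Eventually.of_forall Icc_subset_Ici_self)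
    _ = -a ^ (r + 1) / (r + 1) := by
        rw [integral_Ici_eq_integral_Ioi, integral_Ioi_rpow_of_lt hr ha]

theorem ContinuousOn.integrable_prod_restrict_Icc {f : ℝ × ℝ → ℝ} {a b : ℝ}
    (hf : ContinuousOn f (Icc a b ×ˢ Icc a b)) :
    Integrable f ((volume.restrict (Icc a b)).prod (volume.restrict (Icc a b))) := by
  rw [Measure.prod_restrict]
  exact hf.integrableOn_compact (isCompact_Icc.prod isCompact_Icc)

theorem setIntegral_setIntegral_le_of_le_add_mul {a b c : ℝ} {F k : ℝ → ℝ → ℝ} {g : ℝ → ℝ}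
    (hk : Continuous (Function.uncurry k)) (hk_symm : ∀ t s, k t s = k s t)
    (hk_int : ∀ t ∈ Icc a b, ∫ s in Icc a b, k t s ≤ c)
    (hg : ContinuousOn g (Icc a b)) (hg_nonneg : ∀ t ∈ Icc a b, 0 ≤ g t)
    (hF_nonneg : ∀ t ∈ Icc a b, ∀ s ∈ Icc a b, 0 ≤ F t s)
    (hF : ∀ t ∈ Icc a b, ∀ s ∈ Icc a b, F t s ≤ (g t + g s) * k t s) :
    ∫ t in Icc a b, ∫ s in Icc a b, F t s ≤ 2 * c * ∫ t in Icc a b, g t := by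
  set μ := volume.restrict (Icc a b)
  set G : ℝ × ℝ → ℝ := fun z => g z.1 * k z.1 z.2
  have hGc : ContinuousOn G (Icc a b ×ˢ Icc a b) :=
    (hg.comp continuousOn_fst fun z hz => hz.1).mul hk.continuousOn
  have hG : Integrable G (μ.prod μ) := hGc.integrable_prod_restrict_Icc
  have hGswap : Integrable (fun z => G z.swap) (μ.prod μ) :=
    (hGc.comp continuous_swap.continuousOn fun z hz => ⟨hz.2, hz.1⟩).integrable_prod_restrict_Icc
  have hsplit : ∀ t s, (g t + g s) * k t s = G (t, s) + G (s, t) := fun t s => by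
    simp only [G, hk_symm s t]; ring
  have inner : ∀ t ∈ Icc a b, ∫ s, F t s ∂μ ≤ ∫ s, G (t, s) + G (s, t) ∂μ := by
    intro t ht
    refine integral_mono_of_nonneg ((ae_restrict_iff' measurableSet_Icc).2
      (Filter.Eventually.of_forall (hF_nonneg t ht))) ?_ ((ae_restrict_iff' measurableSet_Icc).2
      (Filter.Eventually.of_forall fun s hs => (hF t ht s hs).trans_eq (hsplit t s)))
    simp only [← hsplit]
    exact ((continuousOn_const.add hg).mul
      (hk.comp (continuous_const.prodMk continuous_id)).continuousOn).integrableOn_Icc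
  have outer : ∫ t, ∫ s, F t s ∂μ ∂μ ≤ ∫ t, ∫ s, G (t, s) + G (s, t) ∂μ ∂μ :=
    integral_mono_of_nonneg ((ae_restrict_iff' measurableSet_Icc).2 (Filter.Eventually.of_forall
      fun t ht => setIntegral_nonneg measurableSet_Icc (hF_nonneg t ht)))
      (hG.add hGswap).integral_prod_left
      ((ae_restrict_iff' measurableSet_Icc).2 (Filter.Eventually.of_forall inner))
  have symmetrize : ∫ t, ∫ s, G (t, s) + G (s, t) ∂μ ∂μ = 2 * ∫ t, g t * ∫ s, k t s ∂μ ∂μ :=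
    calc ∫ t, ∫ s, G (t, s) + G (s, t) ∂μ ∂μ = ∫ z, G z + G z.swap ∂(μ.prod μ) :=
          (integral_prod _ (hG.add hGswap)).symm
      _ = 2 * ∫ z, G z ∂(μ.prod μ) := by
          rw [integral_add hG hGswap, integral_prod_swap G]; ring
      _ = 2 * ∫ t, g t * ∫ s, k t s ∂μ ∂μ := by
          simp only [integral_prod _ hG, G, integral_const_mul]
  have kernel_mass : ∫ t, g t * ∫ s, k t s ∂μ ∂μ ≤ ∫ t, g t * c ∂μ :=
    integral_mono_ae (by simpa only [G, integral_const_mul] using hG.integral_prod_left)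
      (hg.integrableOn_Icc.mul_const c)
      ((ae_restrict_iff' measurableSet_Icc).2 (Filter.Eventually.of_forall
        fun t ht => mul_le_mul_of_nonneg_left (hk_int t ht) (hg_nonneg t ht)))
  calc ∫ t, ∫ s, F t s ∂μ ∂μ ≤ 2 * ∫ t, g t * ∫ s, k t s ∂μ ∂μ := outer.trans_eq symmetrize
    _ ≤ 2 * ∫ t, g t * c ∂μ := by gcongr
    _ = 2 * c * ∫ t, g t ∂μ := by rw [integral_mul_const]; ring

theorem stmt2_general (α δ' C₂ : ℝ) (hα : 0 < α) (hC₂ : 0 < C₂) :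
    ∃ C > 0, ∃ h₀ > 0, ∀ h : ℝ, 0 < h → h < h₀ →
      (∫ t in Set.Icc (C₂ * h) δ', ∫ s in Set.Icc (C₂ * h) δ',
          t ^ (-(2:ℝ)/3) * s ^ (-(1:ℝ)/2) * Real.exp (-α * |t - s| / h))
        ≤ C * h ^ ((5:ℝ)/6) := by
  refine ⟨24 * C₂ ^ (-(1:ℝ)/6) / α, by positivity, 1, one_pos, fun h hh _ => ?_⟩
  have ha : 0 < C₂ * h := by positivity
  have hβ : 0 < α / h := by positivity
  have hpointwise : ∀ t ∈ Icc (C₂ * h) δ', ∀ s ∈ Icc (C₂ * h) δ',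
      t ^ (-(2:ℝ)/3) * s ^ (-(1:ℝ)/2) * exp (-α * |t - s| / h)
        ≤ (t ^ (-(7:ℝ)/6) + s ^ (-(7:ℝ)/6)) * exp (-(α / h) * |t - s|) := by
    intro t ht s hs
    have hmin := rpow_mul_rpow_le_rpow_add_add_rpow_add (p := -(2:ℝ)/3) (q := -(1:ℝ)/2)
      (by norm_num) (by norm_num) (ha.trans_le ht.1) (ha.trans_le hs.1)
    rw [show -(2:ℝ)/3 + -(1:ℝ)/2 = -(7:ℝ)/6 by norm_num] at hmin
    rw [show -α * |t - s| / h = -(α / h) * |t - s| by ring]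
    gcongr
  have hbound := setIntegral_setIntegral_le_of_le_add_mul
    (F := fun t s => t ^ (-(2:ℝ)/3) * s ^ (-(1:ℝ)/2) * exp (-α * |t - s| / h))
    (k := fun t s => exp (-(α / h) * |t - s|)) (g := fun t => t ^ (-(7:ℝ)/6))
    (by fun_prop) (fun t s => by rw [abs_sub_comm])
    (fun t _ => setIntegral_exp_neg_mul_abs_sub_le hβ t _)
    (continuousOn_id.rpow_const fun t ht => Or.inl (ha.trans_le ht.1).ne')
    (fun t ht => rpow_nonneg (ha.le.trans ht.1) _)
    (fun t ht s hs => by have := ha.trans_le ht.1; have := ha.trans_le hs.1; positivity)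
    hpointwise
  calc _ ≤ 2 * (2 / (α / h)) * ∫ t in Icc (C₂ * h) δ', t ^ (-(7:ℝ)/6) := hbound
    _ ≤ 2 * (2 / (α / h)) * (-(C₂ * h) ^ (-(7:ℝ)/6 + 1) / (-(7:ℝ)/6 + 1)) := by
        gcongr
        exact setIntegral_Icc_rpow_le (by norm_num) ha δ'
    _ = 24 * C₂ ^ (-(1:ℝ)/6) / α * h ^ ((5:ℝ)/6) := by
        rw [mul_rpow hC₂.le hh.le, show h ^ ((5:ℝ)/6) = h * h ^ (-(1:ℝ)/6) by
          rw [← rpow_one_add' hh.le (by norm_num)]; norm_num]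
        norm_num
        field_simp
        ring

/-- For any `α > 0`, `δ' > 0` and any fixed constant `C₂ > 0`, there exists `C > 0` such that
for all sufficiently small `h > 0`,
`∬_{[C₂ h, δ']²} t^{-2/3} s^{-1/2} e^{-α|t-s|/h} dt ds ≤ C h^{5/6}`. -/
theorem stmt2 (α δ' C₂ : ℝ) (hα : 0 < α) (hδ' : 0 < δ') (hC₂ : 0 < C₂) :
    ∃ C > 0, ∃ h₀ > 0, ∀ h : ℝ, 0 < h → h < h₀ →
      (∫ t in Set.Icc (C₂ * h) δ', ∫ s in Set.Icc (C₂ * h) δ',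
          t ^ (-(2:ℝ)/3) * s ^ (-(1:ℝ)/2) * Real.exp (-α * |t - s| / h))
        ≤ C * h ^ ((5:ℝ)/6) :=
  stmt2_general α δ' C₂ hα hC₂
end

section
/- Let 𝒜 be analytic near 0 with 𝒜'(0) > 0, and for h > 0 small and k ∈ ℤ define e_k(h) as the solution near 0 of 𝒜(E) = (k + 1/2)π h (when it exists). Then e_k(h) = λ_k(h) h^{2/3} − (λ_k(h)² 𝒜''(0) / (2𝒜'(0))) h^{4/3} + O(h²) uniformly for those k with λ_k(h) = O(1), where λ_k(h) := (−2𝒜(0) + (2k+1)π h)/(2𝒜'(0) h^{2/3}). -/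
/-!
Write `a = 𝒜'(0)`, `c = 𝒜''(0)/2`, `t = h^{2/3}` and `μ = λ t`. The definition of `λ` turns the
quantisation condition into `𝒜(e) - 𝒜(0) = a μ`, so by Taylor's formula
`a e + c e² - a μ = O(e³)`. Inverting this relation to second order: for `e` small it first
gives `|e| ≤ 2|μ|`, then `e - μ = O(μ²)`, and finally
`a (e - (μ - (c/a) μ²)) = (a e + c e² - a μ) + c (μ - e)(μ + e) = O(μ³)`.
Since `|μ| ≤ C₀ t` and `t³ = h²`, the error is `O(h²)`.
-/

open Real Filter Topology Asymptotics

theorem AnalyticAt.isBigO_sub_taylor_two {𝕜 : Type*} [NontriviallyNormedField 𝕜]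
    [CompleteSpace 𝕜] [CharZero 𝕜] {f : 𝕜 → 𝕜} {x : 𝕜} (hf : AnalyticAt 𝕜 f x) :
    (fun y ↦ f (x + y) - (f x + deriv f x * y + iteratedDeriv 2 f x / 2 * y ^ 2))
      =O[𝓝 0] fun y ↦ y ^ 3 := by
  have h := hf.hasFPowerSeriesAt.isBigO_sub_partialSum_pow 3
  simp only [FormalMultilinearSeries.partialSum, Finset.sum_range_succ, Finset.sum_range_zero,
    FormalMultilinearSeries.ofScalars_apply_eq, iteratedDeriv_zero, iteratedDeriv_one,
    smul_eq_mul] at h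
  refine (h.congr_left fun y ↦ by norm_num).trans ?_
  exact (isBigO_refl _ _).norm_left.congr_left fun y ↦ norm_pow y 3

section QuadraticInversion

variable {a c M y μ : ℝ}

theorem abs_mul_sub_mul_le_of_quadratic (hM : 0 ≤ M) (hy₁ : |y| ≤ 1)
    (hR : |a * y + c * y ^ 2 - a * μ| ≤ M * |y| ^ 3) :
    |a * y - a * μ| ≤ (|c| + M) * |y| ^ 2 := by
  have hcube : M * |y| ^ 3 ≤ M * |y| ^ 2 :=
    mul_le_mul_of_nonneg_left (pow_le_pow_of_le_one (abs_nonneg y) hy₁ (by norm_num)) hM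
  calc |a * y - a * μ| = |(a * y + c * y ^ 2 - a * μ) + -(c * y ^ 2)| := by ring_nf
    _ ≤ M * |y| ^ 3 + |c| * |y| ^ 2 := by
        grw [abs_add_le, hR, abs_neg, abs_mul, abs_pow]
    _ ≤ (|c| + M) * |y| ^ 2 := by linarith

theorem abs_le_two_mul_of_quadratic (ha : 0 < a) (hM : 0 ≤ M) (hy₁ : |y| ≤ 1)
    (hy : (|c| + M) * |y| ≤ a / 2) (hR : |a * y + c * y ^ 2 - a * μ| ≤ M * |y| ^ 3) :
    |y| ≤ 2 * |μ| := by
  have h : a * |y| - a * |μ| ≤ a / 2 * |y| :=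
    calc a * |y| - a * |μ| ≤ |a * y - a * μ| := by
          simpa only [abs_mul, abs_of_pos ha] using abs_sub_abs_le_abs_sub (a * y) (a * μ)
      _ ≤ (|c| + M) * |y| * |y| := by
          rw [mul_assoc, ← sq]; exact abs_mul_sub_mul_le_of_quadratic hM hy₁ hR
      _ ≤ a / 2 * |y| := by gcongr
  nlinarith

theorem abs_sub_le_of_quadratic (ha : 0 < a) (hM : 0 ≤ M) (hy₁ : |y| ≤ 1)
    (hy : (|c| + M) * |y| ≤ a / 2) (hR : |a * y + c * y ^ 2 - a * μ| ≤ M * |y| ^ 3) :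
    |μ - y| ≤ 4 * (|c| + M) / a * μ ^ 2 := by
  refine le_of_mul_le_mul_right ?_ ha
  calc |μ - y| * a = |a * y - a * μ| := by
        rw [abs_sub_comm, ← mul_sub, abs_mul, abs_of_pos ha, mul_comm]
    _ ≤ (|c| + M) * |y| ^ 2 := abs_mul_sub_mul_le_of_quadratic hM hy₁ hR
    _ ≤ (|c| + M) * (2 * |μ|) ^ 2 := by
        gcongr; exact abs_le_two_mul_of_quadratic ha hM hy₁ hy hR
    _ = 4 * (|c| + M) / a * μ ^ 2 * a := by
        rw [mul_pow, sq_abs]; field_simp; ring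

theorem abs_sub_quadratic_inverse_le (ha : 0 < a) (hM : 0 ≤ M) (hy₁ : |y| ≤ 1)
    (hy : (|c| + M) * |y| ≤ a / 2) (hR : |a * y + c * y ^ 2 - a * μ| ≤ M * |y| ^ 3) :
    |y - (μ - c / a * μ ^ 2)| ≤ (12 * |c| * (|c| + M) / a + 8 * M) / a * |μ| ^ 3 := by
  have h2 := abs_le_two_mul_of_quadratic ha hM hy₁ hy hR
  have hsub := abs_sub_le_of_quadratic ha hM hy₁ hy hR
  have hadd : |μ + y| ≤ 3 * |μ| := by linarith [abs_add_le μ y]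
  refine le_of_mul_le_mul_right ?_ ha
  calc |y - (μ - c / a * μ ^ 2)| * a = |(y - (μ - c / a * μ ^ 2)) * a| := by
        rw [abs_mul, abs_of_pos ha]
    _ = |(a * y + c * y ^ 2 - a * μ) + c * ((μ - y) * (μ + y))| := by
        congr 1; field_simp; ring
    _ ≤ M * |y| ^ 3 + |c| * (4 * (|c| + M) / a * μ ^ 2 * (3 * |μ|)) := by
        grw [abs_add_le, hR, abs_mul, abs_mul, hsub, hadd]
    _ ≤ M * (2 * |μ|) ^ 3 + |c| * (4 * (|c| + M) / a * μ ^ 2 * (3 * |μ|)) := by gcongr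
    _ = (12 * |c| * (|c| + M) / a + 8 * M) / a * |μ| ^ 3 * a := by
        rw [← sq_abs μ]; field_simp; ring

end QuadraticInversion

/-- Bohr–Sommerfeld expansion: let `𝒜` be analytic near `0` with `𝒜'(0) > 0`, and let
`λ_k(h) = (-2𝒜(0) + (2k+1)π h)/(2𝒜'(0) h^{2/3})`. Then any solution `e` near `0` of
`𝒜(e) = (k + 1/2)π h` satisfies
`e = λ_k(h) h^{2/3} - (λ_k(h)² 𝒜''(0)/(2𝒜'(0))) h^{4/3} + O(h²)`, uniformly for the `k`
with `λ_k(h) = O(1)`. -/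
theorem stmt15 (𝒜 : ℝ → ℝ) (hA : AnalyticAt ℝ 𝒜 0) (hA' : 0 < deriv 𝒜 0)
    (C₀ : ℝ) (hC₀ : 0 < C₀) :
    ∃ C > 0, ∃ h₀ > 0, ∃ r > 0, ∀ h : ℝ, 0 < h → h < h₀ → ∀ k : ℤ,
      ∀ lam : ℝ, lam = (-2 * 𝒜 0 + (2 * (k:ℝ) + 1) * π * h) / (2 * deriv 𝒜 0 * h ^ ((2:ℝ)/3)) →
      |lam| ≤ C₀ →
      ∀ e : ℝ, |e| < r → 𝒜 e = ((k:ℝ) + 1/2) * π * h →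
        |e - (lam * h ^ ((2:ℝ)/3)
              - lam ^ 2 * iteratedDeriv 2 𝒜 0 / (2 * deriv 𝒜 0) * h ^ ((4:ℝ)/3))|
          ≤ C * h ^ 2 := by
  set a := deriv 𝒜 0
  set c := iteratedDeriv 2 𝒜 0 / 2
  obtain ⟨M, hM, hTaylor⟩ := hA.isBigO_sub_taylor_two.exists_nonneg
  have hsmall : Tendsto (fun y ↦ (|c| + M) * |y|) (𝓝 0) (𝓝 0) := by
    simpa using (continuous_abs.tendsto (0 : ℝ)).const_mul (|c| + M)
  obtain ⟨r, hr, hball⟩ := Metric.eventually_nhds_iff.mp <|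
    ((continuous_abs.tendsto' (0 : ℝ) 0 abs_zero).eventually (eventually_le_nhds one_pos)).and <|
    (hsmall.eventually (eventually_le_nhds (half_pos hA'))).and hTaylor.bound
  set K := (12 * |c| * (|c| + M) / a + 8 * M) / a
  refine ⟨K * C₀ ^ 3 + 1, by positivity, 1, one_pos, r, hr, ?_⟩
  intro h hh _ k lam hlam hlamC e he hAe
  obtain ⟨he₁, he, hR⟩ := hball (by simpa using he)
  set t := h ^ ((2:ℝ)/3)
  have ht : 0 < t := rpow_pos_of_pos hh _
  have ht2 : h ^ ((4:ℝ)/3) = t ^ 2 := by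
    rw [← rpow_natCast, ← rpow_mul hh.le]; norm_num
  have ht3 : h ^ 2 = t ^ 3 := by
    rw [← rpow_natCast _ 3, ← rpow_mul hh.le]; norm_num
  have hμ : a * (lam * t) = 𝒜 e - 𝒜 0 := by
    rw [hlam, hAe]; field_simp; ring
  have hμC : |lam * t| ≤ C₀ * t := by
    rw [abs_mul, abs_of_pos ht]; gcongr
  have hR' : |a * e + c * e ^ 2 - a * (lam * t)| ≤ M * |e| ^ 3 := by
    simpa [hμ, ← sub_sub, abs_sub_comm] using hR
  calc _ = |e - (lam * t - c / a * (lam * t) ^ 2)| := by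
        rw [ht2]; congr 2; field_simp; ring
    _ ≤ K * |lam * t| ^ 3 := abs_sub_quadratic_inverse_le hA' hM he₁ he hR'
    _ ≤ K * (C₀ * t) ^ 3 := by gcongr
    _ ≤ (K * C₀ ^ 3 + 1) * h ^ 2 := by
        rw [ht3]; nlinarith [pow_pos ht 3]
end
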